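/- arXiv:1612.03815 — 3 statements merged into one kernel-verified Lean document; each statement's English description precedes it below -/
import Mathlib

section
/- Suppose q_u = −Σ α̂_i g̃_i ≠ 0 satisfies, for each i, ⟨q_u, −g̃_i⟩/(‖q_u‖₂ ‖g̃_i‖₂) ≥ ε_i/‖g̃_i‖₂, where g̃_i = g_i + ē_i with ‖ē_i‖₂ ≤ ε_i. Then q_u is a descent direction for the exact gradients, i.e. ⟨q_u, −g_i⟩ ≥ 0 for all i. -/
/-! The angle condition says `⟪q, -g̃ᵢ⟫ ≥ εᵢ ‖q‖`, while by Cauchy–Schwarz the error term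
`⟪q, ēᵢ⟫` is at least `-‖q‖ ‖ēᵢ‖ ≥ -εᵢ ‖q‖`; since `-gᵢ = -g̃ᵢ + ēᵢ`, the two bounds cancel. -/

open RealInnerProductSpace

section

variable {E : Type*} [NormedAddCommGroup E] [InnerProductSpace ℝ E]

theorem mul_norm_le_inner_neg_of_div_le_div {q v : E} {ε : ℝ} (hv : v ≠ 0)
    (h : ε / ‖v‖ ≤ ⟪q, -v⟫ / (‖q‖ * ‖v‖)) : ε * ‖q‖ ≤ ⟪q, -v⟫ := by
  rcases eq_or_ne q 0 with rfl | hq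
  · simp
  have hv' : 0 < ‖v‖ := norm_pos_iff.mpr hv
  rwa [div_le_div_iff₀ hv' (mul_pos (norm_pos_iff.mpr hq) hv'), mul_comm ‖q‖, ← mul_assoc,
    mul_right_comm, mul_le_mul_iff_left₀ hv'] at h

theorem inner_neg_nonneg_of_mul_norm_le_inner_neg_add {q g e : E} {ε : ℝ} (he : ‖e‖ ≤ ε)
    (h : ε * ‖q‖ ≤ ⟪q, -(g + e)⟫) : 0 ≤ ⟪q, -g⟫ := by
  have herr : -(ε * ‖q‖) ≤ ⟪q, e⟫ := calc
    -(ε * ‖q‖) ≤ -(‖q‖ * ‖e‖) := by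
      rw [mul_comm ε]; exact neg_le_neg (mul_le_mul_of_nonneg_left he (norm_nonneg q))
    _ ≤ ⟪q, e⟫ := neg_le_of_abs_le (abs_real_inner_le_norm q e)
  have hsplit : ⟪q, -g⟫ = ⟪q, -(g + e)⟫ + ⟪q, e⟫ := by
    rw [← inner_add_right, neg_add, neg_add_cancel_right]
  linarith

end

theorem inexact_direction_is_exact_descent_general {n k : ℕ}
    (g gt e : Fin k → EuclideanSpace ℝ (Fin n)) (ε : Fin k → ℝ)
    (hgt : ∀ i, gt i = g i + e i) (he : ∀ i, ‖e i‖ ≤ ε i) (hgt0 : ∀ i, gt i ≠ 0)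
    (q : EuclideanSpace ℝ (Fin n))
    (hangle : ∀ i, ε i / ‖gt i‖ ≤ (inner ℝ q (-gt i) : ℝ) / (‖q‖ * ‖gt i‖)) :
    ∀ i, 0 ≤ (inner ℝ q (-g i) : ℝ) := by
  intro i
  have hsafe := mul_norm_le_inner_neg_of_div_le_div (hgt0 i) (hangle i)
  rw [hgt i] at hsafe
  exact inner_neg_nonneg_of_mul_norm_le_inner_neg_add (he i) hsafe

/-- If the inexact descent direction satisfies the angle-safety condition with respect to
the inexact gradients, then it is a (non-strict) descent direction for the exact gradients. -/
theorem inexact_direction_is_exact_descent {n k : ℕ}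
    (g gt e : Fin k → EuclideanSpace ℝ (Fin n)) (ε α : Fin k → ℝ)
    (hgt : ∀ i, gt i = g i + e i) (he : ∀ i, ‖e i‖ ≤ ε i) (hgt0 : ∀ i, gt i ≠ 0)
    (hα : ∀ i, 0 ≤ α i) (hsum : ∑ i, α i = 1)
    (q : EuclideanSpace ℝ (Fin n)) (hq : q = -∑ i, α i • gt i) (hq0 : q ≠ 0)
    (hangle : ∀ i, ε i / ‖gt i‖ ≤ (inner ℝ q (-gt i) : ℝ) / (‖q‖ * ‖gt i‖)) :
    ∀ i, 0 ≤ (inner ℝ q (-g i) : ℝ) :=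
  inexact_direction_is_exact_descent_general g gt e ε hgt he hgt0 q hangle
end

section
/- Let α̂ minimize ‖Σ_{i=1}^k α_i v_i‖₂² over the standard simplex {α : α_i ≥ 0, Σ α_i = 1}, where v_1,…,v_k ∈ ℝⁿ, and let q = −Σ α̂_i v_i. Then ⟨−v_i, q⟩ ≥ 0 for every i = 1,…,k. -/
/-! The minimizer `u = ∑ α̂ᵢ vᵢ` is the point of the convex set `K = conv {vᵢ}` nearest to `0`,
i.e. the projection of `0` onto `K`; the variational characterization of projections gives
`⟪u, w - u⟫ ≥ 0` for all `w ∈ K`. Taking `w = vᵢ` yields `⟪vᵢ, u⟫ ≥ ‖u‖² ≥ 0`. -/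

theorem real_inner_sub_nonneg_of_forall_norm_le {F : Type*} [NormedAddCommGroup F]
    [InnerProductSpace ℝ F] {K : Set F} (hK : Convex ℝ K) {u : F} (hu : u ∈ K)
    (hmin : ∀ w ∈ K, ‖u‖ ≤ ‖w‖) {w : F} (hw : w ∈ K) : 0 ≤ inner ℝ u (w - u) := by
  have : Nonempty K := ⟨⟨u, hu⟩⟩
  have hproj : ‖0 - u‖ = ⨅ w : K, ‖0 - (w : F)‖ :=
    le_antisymm (le_ciInf fun w ↦ by simpa using hmin w w.2)
      (ciInf_le ⟨0, Set.forall_mem_range.2 fun _ ↦ norm_nonneg _⟩ (⟨u, hu⟩ : K))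
  have := (norm_eq_iInf_iff_real_inner_le_zero hK hu).mp hproj w hw
  rwa [zero_sub, inner_neg_left, neg_nonpos] at this

/-- Schäffler–Schultz–Weinzierl key step: if `α` minimizes `‖∑ α_i v_i‖²` over the
probability simplex and `q = -∑ α_i v_i`, then `⟨-v_i, q⟩ ≥ 0` for every `i`. -/
theorem qop_minimizer_gives_descent {n k : ℕ}
    (v : Fin k → EuclideanSpace ℝ (Fin n)) (α : Fin k → ℝ)
    (hα : ∀ i, 0 ≤ α i) (hsum : ∑ i, α i = 1)
    (hmin : ∀ β : Fin k → ℝ, (∀ i, 0 ≤ β i) → ∑ i, β i = 1 →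
      ‖∑ i, α i • v i‖ ^ 2 ≤ ‖∑ i, β i • v i‖ ^ 2)
    (q : EuclideanSpace ℝ (Fin n)) (hq : q = -∑ i, α i • v i) :
    ∀ i, 0 ≤ (inner ℝ (-v i) q : ℝ) := by
  intro i
  set u := ∑ j, α j • v j
  set K := Fintype.linearCombination ℝ v '' stdSimplex ℝ (Fin k)
  have hK : Convex ℝ K := (convex_stdSimplex ℝ _).linear_image _
  have huK : u ∈ K := ⟨α, ⟨hα, hsum⟩, Fintype.linearCombination_apply ℝ v α⟩
  have hvK : v i ∈ K := ⟨Pi.single i 1, single_mem_stdSimplex ℝ i, by simp⟩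
  have hu_min : ∀ w ∈ K, ‖u‖ ≤ ‖w‖ := by
    rintro _ ⟨β, ⟨hβ, hβsum⟩, rfl⟩
    rw [Fintype.linearCombination_apply, ← pow_le_pow_iff_left₀ (norm_nonneg _) (norm_nonneg _)
      two_ne_zero]
    exact hmin β hβ hβsum
  have h := real_inner_sub_nonneg_of_forall_norm_le hK huK hu_min hvK
  calc 0 ≤ inner ℝ u (v i - u) + ‖u‖ ^ 2 := by positivity
    _ = inner ℝ (-v i) q := by
      rw [hq, inner_neg_neg, inner_sub_right, real_inner_comm, real_inner_self_eq_norm_sq]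
      ring
end

section
/- If x* is a Pareto optimal point of the multiobjective problem min_{x∈ℝⁿ} (f_1(x),…,f_k(x)) with continuously differentiable f_i, then there exist nonnegative scalars α_1,…,α_k with Σ α_i = 1 and Σ α_i ∇f_i(x*) = 0. -/
/-!
Gordan's alternative: either `0` lies in the convex hull of the gradients `∇fᵢ(x*)`, or a
hyperplane separates it from them, giving a direction `v` with `⟪∇fᵢ(x*), v⟫ < 0` for all `i`.
In the second case a small step from `x*` along `v` strictly decreases every objective,
contradicting Pareto optimality.
-/

open Filter Set InnerProductSpace Topology

theorem convexHull_range_subset_image_stdSimplex {ι E : Type*} [Fintype ι] [AddCommGroup E]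
    [Module ℝ E] (g : ι → E) :
    convexHull ℝ (range g) ⊆ Fintype.linearCombination ℝ g '' stdSimplex ℝ ι := by
  classical
  refine convexHull_min ?_ ((convex_stdSimplex ℝ ι).linear_image _)
  rintro _ ⟨i, rfl⟩
  exact ⟨Pi.single i 1, single_mem_stdSimplex ℝ i, by simp⟩

variable {E : Type*} [NormedAddCommGroup E] [InnerProductSpace ℝ E]

theorem exists_forall_inner_neg_of_zero_notMem_convexHull [CompleteSpace E] {ι : Type*}
    [Finite ι] (g : ι → E) (h : 0 ∉ convexHull ℝ (range g)) : ∃ v, ∀ i, ⟪g i, v⟫_ℝ < 0 := by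
  obtain ⟨L, u, hLu, hu⟩ := geometric_hahn_banach_point_closed (convex_convexHull ℝ _)
    ((finite_range g).isCompact_convexHull (𝕜 := ℝ) |>.isClosed) h
  have hu₀ : 0 < u := by simpa using hLu
  refine ⟨-(toDual ℝ E).symm L, fun i => ?_⟩
  rw [inner_neg_right, real_inner_comm, toDual_symm_apply]
  linarith [hu _ (subset_convexHull ℝ _ ⟨i, rfl⟩)]

theorem exists_mem_stdSimplex_sum_smul_eq_zero_or_exists_forall_inner_neg [CompleteSpace E]
    {ι : Type*} [Fintype ι] (g : ι → E) :
    (∃ α ∈ stdSimplex ℝ ι, ∑ i, α i • g i = 0) ∨ ∃ v, ∀ i, ⟪g i, v⟫_ℝ < 0 := by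
  by_cases h : 0 ∈ convexHull ℝ (range g)
  · obtain ⟨α, hα, hsum⟩ := convexHull_range_subset_image_stdSimplex g h
    exact .inl ⟨α, hα, by simpa [Fintype.linearCombination_apply] using hsum⟩
  · exact .inr (exists_forall_inner_neg_of_zero_notMem_convexHull g h)

theorem HasDerivAt.eventually_nhdsGT_lt_of_neg {φ : ℝ → ℝ} {c a : ℝ} (h : HasDerivAt φ c a)
    (hc : c < 0) : ∀ᶠ t in 𝓝[>] a, φ t < φ a := by
  have hslope : ∀ᶠ t in 𝓝[>] a, slope φ a t < 0 :=
    (hasDerivAt_iff_tendsto_slope.mp h).mono_left (nhdsWithin_mono _ fun t ht => ne_of_gt ht)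
      |>.eventually (Iio_mem_nhds hc)
  filter_upwards [hslope, self_mem_nhdsWithin] with t hneg (ht : a < t)
  rw [slope_def_field, div_neg_iff] at hneg
  rcases hneg with ⟨-, h⟩ | ⟨h, -⟩ <;> linarith

theorem HasGradientAt.eventually_lt_of_inner_neg [CompleteSpace E] {f : E → ℝ} {g x v : E}
    (hf : HasGradientAt f g x) (hv : ⟪g, v⟫_ℝ < 0) :
    ∀ᶠ t in 𝓝[>] (0 : ℝ), f (x + t • v) < f x := by
  have hline : HasDerivAt (fun t : ℝ => x + t • v) v 0 := by
    simpa using ((hasDerivAt_id (0 : ℝ)).smul_const v).const_add x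
  have hφ : HasDerivAt (fun t : ℝ => f (x + t • v)) ⟪g, v⟫_ℝ 0 := by
    have hf' : HasFDerivAt f (toDual ℝ E g) (x + (0 : ℝ) • v) := by simpa using hf.hasFDerivAt
    exact hf'.comp_hasDerivAt 0 hline
  simpa using hφ.eventually_nhdsGT_lt_of_neg hv

/-- KKT necessary condition for multiobjective optimization: if `x*` is Pareto optimal
for continuously differentiable objectives, then some convex combination of the gradients
vanishes at `x*`. -/
theorem multiobjective_kkt {n k : ℕ} (hk : 0 < k)
    (f : Fin k → EuclideanSpace ℝ (Fin n) → ℝ)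
    (hf : ∀ i, ContDiff ℝ 1 (f i)) (xs : EuclideanSpace ℝ (Fin n))
    (hpareto : ¬∃ x, (∀ i, f i x ≤ f i xs) ∧ ∃ j, f j x < f j xs) :
    ∃ α : Fin k → ℝ, (∀ i, 0 ≤ α i) ∧ (∑ i, α i = 1) ∧
      ∑ i, α i • gradient (f i) xs = 0 := by
  rcases exists_mem_stdSimplex_sum_smul_eq_zero_or_exists_forall_inner_neg
    (fun i => gradient (f i) xs) with ⟨α, ⟨hα₀, hα₁⟩, hsum⟩ | ⟨v, hv⟩
  · exact ⟨α, hα₀, hα₁, hsum⟩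
  · have hdesc : ∀ᶠ t in 𝓝[>] (0 : ℝ), ∀ i, f i (xs + t • v) < f i xs :=
      eventually_all.2 fun i =>
        ((hf i).differentiable one_ne_zero xs).hasGradientAt.eventually_lt_of_inner_neg (hv i)
    obtain ⟨t, ht⟩ := hdesc.exists
    exact absurd ⟨xs + t • v, fun i => (ht i).le, ⟨0, hk⟩, ht _⟩ hpareto
end
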